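/- arXiv:0902.3483 — 4 statements merged into one kernel-verified Lean document; each statement's English description precedes it below -/
import Mathlib

section
/- There exists a compact subset K of an infinite-dimensional separable Hilbert space H such that the only bounded linear operator T on H satisfying TK ⊇ K is the identity operator. -/
open Filter Topology Metric

/-!
Take an orthonormal sequence `e` with dense span, `link e p = e p + e (p + 1) / 2`,
`weight k = 2 ^ (-k²)`, `point e k = weight k • link e ⌊k / 2⌋` and `K = {0} ∪ range (point e)`.
If `K ⊆ T K`, pick `f` with `T (point e (f k)) = point e k`; it is injective, and since the
weights decay faster than any geometric sequence, `‖point e k‖ ≤ ‖T‖ ‖point e (f k)‖` forces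
`f k ≤ k` eventually, so `f` is onto. The two points of `K` on the ray of `link e p` have ratio
`2 ^ (-(4p + 1))`, which tells the rays apart, and `T` maps rays to rays preserving ratios;
hence `T` fixes every `link e p`. Then `u p = T (e p) - e p` is bounded with
`u p = -u (p + 1) / 2`, so `u = 0` and `T = id`.
-/

theorem Orthonormal.countable {𝕜 E ι : Type*} [RCLike 𝕜] [NormedAddCommGroup E]
    [InnerProductSpace 𝕜 E] [TopologicalSpace.SeparableSpace E] {v : ι → E}
    (hv : Orthonormal 𝕜 v) : Countable ι := by
  refine Pairwise.countable_of_isOpen_disjoint (s := fun i => ball (v i) 2⁻¹)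
    (fun i j hij => ball_disjoint_ball ?_) (fun _ => isOpen_ball)
    (fun _ => nonempty_ball.2 (by norm_num))
  have hdist : dist (v i) (v j) ^ 2 = 2 := by
    rw [dist_eq_norm, @norm_sub_sq 𝕜, hv.norm_eq_one, hv.norm_eq_one, hv.inner_eq_zero hij]
    norm_num
  nlinarith [dist_nonneg (x := v i) (y := v j)]

theorem exists_orthonormal_nat_dense_span {𝕜 E : Type*} [RCLike 𝕜] [NormedAddCommGroup E]
    [InnerProductSpace 𝕜 E] [CompleteSpace E] [TopologicalSpace.SeparableSpace E]
    (hE : ¬ FiniteDimensional 𝕜 E) :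
    ∃ e : ℕ → E, Orthonormal 𝕜 e ∧ Dense (Submodule.span 𝕜 (Set.range e) : Set E) := by
  obtain ⟨w, b, -⟩ := exists_hilbertBasis 𝕜 E
  have : Countable w := b.orthonormal.countable
  have : Infinite w := by
    by_contra hfin
    have : Fintype w := @Fintype.ofFinite _ (not_infinite_iff_finite.1 hfin)
    exact hE (Module.Finite.of_basis b.toOrthonormalBasis.toBasis)
  obtain ⟨φ⟩ := nonempty_equiv_of_countable (α := ℕ) (β := w)
  refine ⟨b ∘ φ, b.orthonormal.comp φ φ.injective, ?_⟩
  rw [EquivLike.range_comp, Submodule.dense_iff_topologicalClosure_eq_top]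
  exact b.dense_span

theorem Function.Injective.surjective_of_eventually_le {f : ℕ → ℕ} (hf : Function.Injective f)
    (hle : ∀ᶠ k in atTop, f k ≤ k) : Function.Surjective f := by
  intro j
  obtain ⟨N, hN⟩ := eventually_atTop.1 hle
  set n := N + (Finset.range N).sup f + j + 1
  have hmaps : Set.MapsTo f (Finset.range n) (Finset.range n) := by
    intro k hk
    simp only [Finset.coe_range, Set.mem_Iio] at hk ⊢
    rcases lt_or_ge k N with hkN | hkN
    · have := Finset.le_sup (f := f) (Finset.mem_range.2 hkN)
      omega
    · have := hN k hkN
      omega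
  obtain ⟨k, -, hk⟩ := Finset.surjOn_of_injOn_of_card_le f hmaps hf.injOn le_rfl
    (Finset.mem_range.2 (by omega : j < n))
  exact ⟨k, hk⟩

theorem eq_zero_of_eq_smul_succ {E : Type*} [NormedAddCommGroup E] [NormedSpace ℝ E]
    {u : ℕ → E} {c C : ℝ} (hc : |c| < 1) (hu : ∀ n, ‖u n‖ ≤ C)
    (h : ∀ n, u n = c • u (n + 1)) (n : ℕ) : u n = 0 := by
  have hdecay : ∀ m n, ‖u n‖ ≤ |c| ^ m * C := by
    intro m
    induction m with
    | zero => simpa using hu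
    | succ m ih =>
      intro n
      calc ‖u n‖ = |c| * ‖u (n + 1)‖ := by rw [h n, norm_smul, Real.norm_eq_abs]
        _ ≤ |c| * (|c| ^ m * C) := by gcongr; exact ih (n + 1)
        _ = |c| ^ (m + 1) * C := by ring
  have hlim : Tendsto (fun m => |c| ^ m * C) atTop (𝓝 0) := by
    simpa using (tendsto_pow_atTop_nhds_zero_of_lt_one (abs_nonneg c) hc).mul_const C
  exact norm_le_zero_iff.1 (ge_of_tendsto' hlim fun m => hdecay m n)

theorem ContinuousLinearMap.apply_eq_self_of_apply_add_smul_succ {E : Type*}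
    [NormedAddCommGroup E] [NormedSpace ℝ E] (T : E →L[ℝ] E) {e : ℕ → E} {c C : ℝ}
    (hc : |c| < 1) (he : ∀ n, ‖e n‖ ≤ C)
    (hT : ∀ n, T (e n + c • e (n + 1)) = e n + c • e (n + 1)) (n : ℕ) : T (e n) = e n := by
  refine sub_eq_zero.1 (eq_zero_of_eq_smul_succ (u := fun n => T (e n) - e n) (c := -c)
    (C := ‖T‖ * C + C) (by rwa [abs_neg]) (fun n => ?_) (fun n => ?_) n)
  · exact (norm_sub_le _ _).trans (add_le_add (T.le_of_opNorm_le le_rfl (e n) |>.trans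
      (mul_le_mul_of_nonneg_left (he n) (norm_nonneg T))) (he n))
  · have := hT n
    rw [map_add, map_smul] at this
    linear_combination (norm := module) this

noncomputable section

namespace TrivialCovering

open scoped RealInnerProductSpace

variable {E : Type*} [NormedAddCommGroup E] [InnerProductSpace ℝ E] {e : ℕ → E}

def weight (k : ℕ) : ℝ := 2⁻¹ ^ (k * k)

def link (e : ℕ → E) (p : ℕ) : E := e p + (2⁻¹ : ℝ) • e (p + 1)

def point (e : ℕ → E) (k : ℕ) : E := weight k • link e (k / 2)

def carrier (e : ℕ → E) : Set E := insert 0 (Set.range (point e))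

theorem weight_pos (k : ℕ) : 0 < weight k := by unfold weight; positivity

theorem weight_mul (a b : ℕ) : weight a * weight b = 2⁻¹ ^ (a * a + b * b) :=
  (pow_add _ _ _).symm

theorem weight_mul_two_pow_le {j k : ℕ} (h : k < j) : weight j * 2 ^ (2 * k + 1) ≤ weight k := by
  calc weight j * 2 ^ (2 * k + 1) ≤ 2⁻¹ ^ (k * k + (2 * k + 1)) * 2 ^ (2 * k + 1) := by
        gcongr
        exact pow_le_pow_of_le_one (by norm_num) (by norm_num) (by nlinarith)
    _ = weight k := by rw [pow_add, mul_assoc, ← mul_pow]; norm_num [weight]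

theorem tendsto_weight : Tendsto weight atTop (𝓝 0) :=
  (tendsto_pow_atTop_nhds_zero_of_lt_one (by norm_num) (by norm_num)).comp
    (tendsto_id.atTop_mul_atTop₀ tendsto_id)

theorem norm_link (he : Orthonormal ℝ e) (p : ℕ) : ‖link e p‖ = √(5 / 4) := by
  rw [← Real.sqrt_sq (norm_nonneg _), link, norm_add_sq_real, real_inner_smul_right,
    he.inner_eq_zero (by omega), norm_smul, he.norm_eq_one, he.norm_eq_one]
  norm_num

theorem norm_point (he : Orthonormal ℝ e) (k : ℕ) : ‖point e k‖ = weight k * √(5 / 4) := by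
  rw [point, norm_smul, norm_link he, Real.norm_of_nonneg (weight_pos k).le]

theorem point_ne_zero (he : Orthonormal ℝ e) (k : ℕ) : point e k ≠ 0 := by
  rw [← norm_pos_iff, norm_point he]
  exact mul_pos (weight_pos k) (by positivity)

theorem isCompact_carrier (he : Orthonormal ℝ e) : IsCompact (carrier e) := by
  refine Tendsto.isCompact_insert_range (tendsto_zero_iff_norm_tendsto_zero.2 ?_)
  simpa [norm_point he] using tendsto_weight.mul_const √(5 / 4)

theorem inner_link (he : Orthonormal ℝ e) (t p : ℕ) :
    ⟪e t, link e p⟫ = (if t = p then 1 else 0) + 2⁻¹ * (if t = p + 1 then 1 else 0) := by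
  classical
  rw [link, inner_add_right, real_inner_smul_right, orthonormal_iff_ite.1 he,
    orthonormal_iff_ite.1 he]

theorem eq_of_smul_link_eq (he : Orthonormal ℝ e) {p q : ℕ} {c d : ℝ} (hc : 0 < c)
    (h : c • link e p = d • link e q) : p = q ∧ c = d := by
  have hp := congrArg (⟪e p, ·⟫) h
  have hq := congrArg (⟪e q, ·⟫) h
  simp only [real_inner_smul_right, inner_link he] at hp hq
  by_cases hpq : p = q
  · subst hpq
    simp only [if_true, if_neg (Nat.ne_add_one p)] at hp
    exact ⟨rfl, by linarith⟩
  · exfalso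
    split_ifs at hp hq <;> first | omega | linarith

theorem point_injective (he : Orthonormal ℝ e) : Function.Injective (point e) := by
  intro a b h
  have hw := (eq_of_smul_link_eq he (weight_pos a) h).2
  rw [weight, weight, pow_right_inj₀ (by norm_num) (by norm_num)] at hw
  exact Nat.mul_self_inj.1 hw

variable {T : E →L[ℝ] E} {f : ℕ → ℕ}

theorem exists_apply_point_eq (he : Orthonormal ℝ e) (hT : carrier e ⊆ T '' carrier e) :
    ∃ f : ℕ → ℕ, ∀ k, T (point e (f k)) = point e k := by
  have hpre : ∀ k, ∃ j, T (point e j) = point e k := fun k => by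
    obtain ⟨u, hu, hTu⟩ := hT (Set.mem_insert_of_mem _ (Set.mem_range_self k))
    rcases hu with rfl | ⟨j, rfl⟩
    · exact absurd (hTu.symm.trans (map_zero T)) (point_ne_zero he k)
    · exact ⟨j, hTu⟩
  choose f hf using hpre
  exact ⟨f, hf⟩

theorem eventually_le_of_apply_point_eq (he : Orthonormal ℝ e)
    (hf : ∀ k, T (point e (f k)) = point e k) : ∀ᶠ k in atTop, f k ≤ k := by
  obtain ⟨N, hN⟩ := pow_unbounded_of_one_lt ‖T‖ (by norm_num : (1 : ℝ) < 2)
  refine eventually_atTop.2 ⟨N, fun k hk => not_lt.1 fun hlt => ?_⟩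
  have hbound : weight k ≤ ‖T‖ * weight (f k) := by
    have := T.le_opNorm (point e (f k))
    rw [hf k, norm_point he, norm_point he, ← mul_assoc] at this
    exact le_of_mul_le_mul_right this (by positivity)
  have hpow : weight k * 2 ^ (2 * k + 1) ≤ weight k * ‖T‖ :=
    calc weight k * 2 ^ (2 * k + 1) ≤ ‖T‖ * weight (f k) * 2 ^ (2 * k + 1) := by gcongr
      _ = ‖T‖ * (weight (f k) * 2 ^ (2 * k + 1)) := by ring
      _ ≤ ‖T‖ * weight k := by gcongr; exact weight_mul_two_pow_le hlt
      _ = weight k * ‖T‖ := mul_comm _ _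
  have hN' : (2 : ℝ) ^ N ≤ 2 ^ (2 * k + 1) := pow_le_pow_right₀ (by norm_num) (by omega)
  linarith [le_of_mul_le_mul_left hpow (weight_pos k)]

theorem apply_link (he : Orthonormal ℝ e) (hf : ∀ k, T (point e (f k)) = point e k)
    (hsurj : Function.Surjective f) (p : ℕ) : T (link e p) = link e p := by
  obtain ⟨a, ha⟩ := hsurj (2 * p)
  obtain ⟨b, hb⟩ := hsurj (2 * p + 1)
  have hpoint : ∀ k, k / 2 = p → point e k = weight k • link e p := fun k hk => by
    rw [point, hk]
  have hTa : weight (2 * p) • T (link e p) = weight a • link e (a / 2) := by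
    rw [← map_smul, ← hpoint _ (by omega), ← ha, hf, point]
  have hTb : weight (2 * p + 1) • T (link e p) = weight b • link e (b / 2) := by
    rw [← map_smul, ← hpoint _ (by omega), ← hb, hf, point]
  have hab : (weight (2 * p + 1) * weight a) • link e (a / 2)
      = (weight (2 * p) * weight b) • link e (b / 2) := by
    rw [mul_smul, ← hTa, mul_smul, ← hTb, smul_comm]
  obtain ⟨hdiv, hw⟩ := eq_of_smul_link_eq he (mul_pos (weight_pos _) (weight_pos _)) hab
  rw [weight_mul, weight_mul, pow_right_inj₀ (by norm_num) (by norm_num)] at hw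
  have hne : a ≠ b := by rintro rfl; omega
  -- `a`, `b` are consecutive and `(2p + 1)² + a² = (2p)² + b²`, so `b = a + 1 = 2p + 1`
  have ha2 : a = 2 * p := by
    rcases (by omega : b = a + 1 ∨ a = b + 1) with rfl | rfl <;> nlinarith
  rw [ha2, Nat.mul_div_cancel_left p two_pos] at hTa
  exact smul_right_injective E (weight_pos _).ne' hTa

theorem eq_id_of_subset_image (he : Orthonormal ℝ e)
    (hdense : Dense (Submodule.span ℝ (Set.range e) : Set E))
    (hT : carrier e ⊆ T '' carrier e) : T = ContinuousLinearMap.id ℝ E := by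
  obtain ⟨f, hf⟩ := exists_apply_point_eq he hT
  have hinj : Function.Injective f := fun a b h => point_injective he <| by
    rw [← hf a, ← hf b, h]
  have hsurj := hinj.surjective_of_eventually_le (eventually_le_of_apply_point_eq he hf)
  have hfix : ∀ p, T (e p) = e p :=
    T.apply_eq_self_of_apply_add_smul_succ (by norm_num [abs_of_pos])
      (fun p => (he.norm_eq_one p).le) (apply_link he hf hsurj)
  refine ContinuousLinearMap.ext_on hdense ?_
  rintro _ ⟨p, rfl⟩
  exact hfix p

end TrivialCovering

end

/-- There exists a compact subset `K` of an infinite-dimensional separable Hilbert space `H`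
such that the only bounded linear operator `T` on `H` satisfying `T K ⊇ K` is the identity. -/
theorem exists_compact_set_with_trivial_covering_semigroup
    {H : Type*} [NormedAddCommGroup H] [InnerProductSpace ℝ H] [CompleteSpace H]
    [TopologicalSpace.SeparableSpace H] (hH : ¬ FiniteDimensional ℝ H) :
    ∃ K : Set H, IsCompact K ∧
      ∀ T : H →L[ℝ] H, K ⊆ T '' K → T = ContinuousLinearMap.id ℝ H := by
  obtain ⟨e, he, hdense⟩ := exists_orthonormal_nat_dense_span hH
  exact ⟨TrivialCovering.carrier e, TrivialCovering.isCompact_carrier he,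
    fun T hT => TrivialCovering.eq_id_of_subset_image he hdense hT⟩
end

section
/- Let K be an absolutely convex compact subset of a Banach space X whose linear span is infinite-dimensional. Then every bounded linear operator T on X that leaves V_K invariant (i.e., T(V_K) ⊆ V_K) lies in the closure of G(K) in the weak operator topology; that is, A_K ⊆ WG(K). -/
open Filter Topology Metric
open scoped ENNReal NNReal

/-- The Kolmogorov `n`-width of a set `K`: the infimum over all `n`-dimensional linear
subspaces `V` of `sup_{x ∈ K} dist(x, V)` (valued in `ℝ≥0∞` to avoid junk values). -/
noncomputable def kolWidth {X : Type*} [NormedAddCommGroup X] [NormedSpace ℝ X]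
    (K : Set X) (n : ℕ) : ℝ≥0∞ :=
  ⨅ (V : Submodule ℝ X) (_ : FiniteDimensional ℝ V ∧ Module.finrank ℝ V = n),
    ⨆ x ∈ K, Metric.infEDist x (V : Set X)

/-- A sequence is lacunary if `liminf aₙ₊₁/aₙ = 0`. -/
def Lacunary (a : ℕ → ℝ≥0∞) : Prop :=
  Filter.liminf (fun n => a (n + 1) / a n) Filter.atTop = 0

open scoped Pointwise

/-!
A weak-operator neighbourhood of `T` is cut out by finitely many conditions `y (D x) = y (T x)`,
so it suffices, for finitely many vectors `x` and a functional `φ` with finite-dimensional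
values, to find `D` with `K ⊆ D K` and `φ (D x) = φ (T x)`.

A finite-rank `π` vanishing on `V_K` with `x - π x ∈ V_K` reduces this, via
`D = D₀ + (T - D₀) π`, to a basis `u` of a finite-dimensional subspace of `V_K`. As `span K` is
infinite-dimensional and dense in `V_K`, there are `a_t, b_t ∈ span K` with `φ a_t = φ u_t`,
`φ b_t = φ (T u_t)` and `u, a, b` linearly independent. With functionals `θ` dual to `u` and
vanishing on `a, b`, put `M_a = ∑ θ_t ⊗ a_t`, `M_b = ∑ θ_t ⊗ b_t`. All products of `M_a, M_b`
vanish, so `D₀ = c (1 - M_a) + M_b` has the right inverse `c⁻¹ (1 + M_a) - c⁻² M_b`, which maps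
the bounded absolutely convex `K` into itself once `c` is large, while
`φ (D₀ u_t) = φ (c (u_t - a_t) + b_t) = φ (T u_t)`.
-/

namespace ContinuousLinearMapWOT

variable {𝕜₁ 𝕜₂ : Type*} [NormedField 𝕜₁] [NormedField 𝕜₂] {σ : 𝕜₁ →+* 𝕜₂}
  {E F : Type*} [AddCommGroup E] [TopologicalSpace E] [Module 𝕜₁ E]
  [AddCommGroup F] [TopologicalSpace F] [Module 𝕜₂ F]
  [IsTopologicalAddGroup F] [ContinuousConstSMul 𝕜₂ F]

theorem ofCLM_mem_closure_image {S : Set (E →SL[σ] F)} {T : E →SL[σ] F}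
    (h : ∀ s : Finset (E × StrongDual 𝕜₂ F), ∃ D ∈ S, ∀ p ∈ s, p.2 (D p.1) = p.2 (T p.1)) :
    ofCLM T ∈ closure (ofCLM '' S) := by
  choose D hDS hD using h
  refine mem_closure_of_tendsto (f := fun s ↦ ofCLM (D s)) (b := atTop) ?_
    (Eventually.of_forall fun s ↦ ⟨D s, hDS s, rfl⟩)
  rw [tendsto_iff_forall_dual_apply_tendsto]
  intro x y
  refine tendsto_const_nhds.congr' ?_
  filter_upwards [eventually_ge_atTop {(x, y)}] with s hs
  exact (hD s (x, y) (hs (Finset.mem_singleton_self _))).symm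

end ContinuousLinearMapWOT

section AbsolutelyConvex

variable {E : Type*} [AddCommGroup E] [Module ℝ E] {K : Set E}

theorem Convex.add_mem_add_smul (hK : Convex ℝ K) {a b : ℝ} (ha : 0 ≤ a) (hb : 0 ≤ b)
    {x y : E} (hx : x ∈ a • K) (hy : y ∈ b • K) : x + y ∈ (a + b) • K := by
  rw [hK.add_smul ha hb]
  exact Set.add_mem_add hx hy

theorem Convex.sum_mem_sum_smul (hK : Convex ℝ K) (h0 : (0 : E) ∈ K) {ι : Type*}
    (s : Finset ι) {c : ι → ℝ} {x : ι → E} (hc : ∀ i ∈ s, 0 ≤ c i)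
    (hx : ∀ i ∈ s, x i ∈ c i • K) : ∑ i ∈ s, x i ∈ (∑ i ∈ s, c i) • K := by
  classical
  induction s using Finset.induction_on with
  | empty => simpa using Set.zero_mem_smul_set h0
  | insert i s hi ih =>
    rw [Finset.sum_insert hi, Finset.sum_insert hi]
    have hc' : ∀ j ∈ s, 0 ≤ c j := fun j hj ↦ hc j (Finset.mem_insert_of_mem hj)
    exact hK.add_mem_add_smul (hc i (s.mem_insert_self i)) (Finset.sum_nonneg hc')
      (hx i (s.mem_insert_self i)) (ih hc' fun j hj ↦ hx j (Finset.mem_insert_of_mem hj))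

theorem Balanced.smul_mem_mul_smul (hK : Balanced ℝ K) {a b c : ℝ} (hac : ‖a‖ ≤ c) {x : E}
    (hx : x ∈ b • K) : a • x ∈ (c * b) • K := by
  refine hK.smul_mono ?_ (by rw [← smul_smul]; exact Set.smul_mem_smul_set hx)
  rw [norm_mul, norm_mul]
  exact mul_le_mul_of_nonneg_right (hac.trans (Real.le_norm_self c)) (norm_nonneg b)

theorem exists_nonneg_mem_smul_of_mem_span (hconv : Convex ℝ K) (hbal : Balanced ℝ K)
    (h0 : (0 : E) ∈ K) {x : E} (hx : x ∈ Submodule.span ℝ K) :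
    ∃ c : ℝ, 0 ≤ c ∧ x ∈ c • K := by
  induction hx using Submodule.span_induction with
  | mem x hx => exact ⟨1, zero_le_one, by rwa [one_smul]⟩
  | zero => exact ⟨1, zero_le_one, by rwa [one_smul]⟩
  | add x y _ _ hx hy =>
    obtain ⟨a, ha, hxa⟩ := hx
    obtain ⟨b, hb, hyb⟩ := hy
    exact ⟨a + b, add_nonneg ha hb, hconv.add_mem_add_smul ha hb hxa hyb⟩
  | smul r x _ hx =>
    obtain ⟨c, hc, hxc⟩ := hx
    exact ⟨‖r‖ * c, mul_nonneg (norm_nonneg r) hc, hbal.smul_mem_mul_smul le_rfl hxc⟩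

end AbsolutelyConvex

section LinearAlgebra

variable {𝕜 M : Type*} [Field 𝕜] [AddCommGroup M] [Module 𝕜 M]

theorem Submodule.not_finiteDimensional_inf_ker {N : Type*} [AddCommGroup N] [Module 𝕜 N]
    [FiniteDimensional 𝕜 N] {P : Submodule 𝕜 M} (hP : ¬FiniteDimensional 𝕜 P)
    (φ : M →ₗ[𝕜] N) : ¬FiniteDimensional 𝕜 ↥(P ⊓ LinearMap.ker φ) := fun h ↦
  hP <| Module.Finite.iff_fg.mpr <| Submodule.fg_of_fg_map_of_fg_inf_ker φ
    (IsNoetherian.noetherian _) (Module.Finite.iff_fg.mp h)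

theorem Submodule.exists_linearIndependent_mkQ_comp {P W : Submodule 𝕜 M}
    (hP : ¬FiniteDimensional 𝕜 P) [FiniteDimensional 𝕜 W] (ι : Type*) [Finite ι] :
    ∃ κ : ι → M, (∀ i, κ i ∈ P) ∧ LinearIndependent 𝕜 (W.mkQ ∘ κ) := by
  set Q := P.map W.mkQ
  have hQ : Cardinal.aleph0 ≤ Module.rank 𝕜 Q := by
    refine not_lt.mp fun h ↦ hP <| Module.Finite.iff_fg.mpr ?_
    refine fg_of_fg_map_of_fg_inf_ker W.mkQ
      (Module.Finite.iff_fg.mp (Module.rank_lt_aleph0_iff.mp h)) ?_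
    rw [ker_mkQ]
    exact Module.Finite.iff_fg.mp inferInstance
  obtain ⟨f, hf⟩ := exists_linearIndependent_of_le_rank (R := 𝕜) (M := Q)
    ((Cardinal.natCast_lt_aleph0 (n := Nat.card ι)).le.trans hQ)
  choose κ hκP hκ using fun i ↦ mem_map.mp (f (Finite.equivFin ι i)).2
  refine ⟨κ, hκP, ?_⟩
  rw [show W.mkQ ∘ κ = Q.subtype ∘ f ∘ Finite.equivFin ι from funext hκ]
  exact (hf.comp _ (Finite.equivFin ι).injective).map' Q.subtype Q.ker_subtype

end LinearAlgebra

section Functionals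

variable {X : Type*} [NormedAddCommGroup X] [NormedSpace ℝ X]
  {F : Type*} [NormedAddCommGroup F] [NormedSpace ℝ F] [FiniteDimensional ℝ F]

theorem Submodule.exists_mem_apply_eq_of_mem_topologicalClosure {S : Submodule ℝ X}
    (φ : X →L[ℝ] F) {y : X} (hy : y ∈ S.topologicalClosure) : ∃ w ∈ S, φ w = φ y := by
  have hφy : φ y ∈ closure (S.map (φ : X →ₗ[ℝ] F) : Set F) :=
    map_mem_closure φ.continuous hy fun z hz ↦ ⟨z, hz, rfl⟩
  rwa [(Submodule.closed_of_finiteDimensional _).closure_eq] at hφy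

theorem exists_mem_apply_eq_linearIndependent_mkQ_comp {S : Submodule ℝ X}
    (hS : ¬FiniteDimensional ℝ S) (φ : X →L[ℝ] F) (W : Submodule ℝ X) [FiniteDimensional ℝ W]
    {ι : Type*} [Finite ι] {y : ι → X} (hy : ∀ i, y i ∈ S.topologicalClosure) :
    ∃ w : ι → X, (∀ i, w i ∈ S) ∧ (∀ i, φ (w i) = φ (y i)) ∧
      LinearIndependent ℝ (W.mkQ ∘ w) := by
  choose w' hw'S hw'φ using fun i ↦ S.exists_mem_apply_eq_of_mem_topologicalClosure φ (hy i)
  obtain ⟨W', hWW', hw'W', _⟩ : ∃ W' : Submodule ℝ X, W ≤ W' ∧ (∀ i, w' i ∈ W') ∧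
      FiniteDimensional ℝ W' :=
    ⟨W ⊔ Submodule.span ℝ (Set.range w'), le_sup_left,
      fun i ↦ Submodule.mem_sup_right (Submodule.subset_span ⟨i, rfl⟩),
      have := FiniteDimensional.span_of_finite ℝ (Set.finite_range w'); inferInstance⟩
  obtain ⟨κ, hκ, hκli⟩ := Submodule.exists_linearIndependent_mkQ_comp (W := W')
    (S.not_finiteDimensional_inf_ker hS (φ : X →ₗ[ℝ] F)) ι
  refine ⟨w' + κ, fun i ↦ S.add_mem (hw'S i) (hκ i).1, fun i ↦ ?_, ?_⟩
  · simp [show φ (κ i) = 0 from (hκ i).2, hw'φ i]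
  · refine .of_comp (Submodule.factor hWW') ?_
    have : Submodule.factor hWW' ∘ W.mkQ ∘ (w' + κ) = W'.mkQ ∘ κ := funext fun i ↦ by
      simp [(Submodule.Quotient.mk_eq_zero W').mpr (hw'W' i)]
    rwa [this]

theorem LinearIndependent.exists_dual {ι : Type*} [Finite ι] [DecidableEq ι] {v : ι → X}
    (hv : LinearIndependent ℝ v) :
    ∃ θ : ι → StrongDual ℝ X, ∀ i j, θ i (v j) = if i = j then 1 else 0 := by
  have := FiniteDimensional.span_of_finite ℝ (Set.finite_range v)
  set b := Module.Basis.span hv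
  choose θ hθ using fun i ↦
    exists_extension_norm_eq _ (LinearMap.toContinuousLinearMap (b.coord i))
  refine ⟨θ, fun i j ↦ ?_⟩
  have hvj : v j = b j := (congrArg Subtype.val (Module.Basis.span_apply hv j)).symm
  rw [hvj, (hθ i).1]
  simp [Finsupp.single_apply, eq_comm]

theorem Submodule.exists_continuousLinearMap_vanishing_sub_mem (V : Submodule ℝ X)
    [IsClosed (V : Set X)] (E : Submodule ℝ X) [FiniteDimensional ℝ E] :
    ∃ π : X →L[ℝ] X, (∀ v ∈ V, π v = 0) ∧ ∀ x ∈ E, x - π x ∈ V := by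
  obtain ⟨P, hP⟩ := Submodule.ClosedComplemented.of_finiteDimensional (E.map V.mkQ)
  obtain ⟨g, hg⟩ := (V.mkQ.submoduleMap E).exists_rightInverse_of_surjective
    (LinearMap.range_eq_top_of_surjective _ (V.mkQ.submoduleMap_surjective E))
  have hg' : ∀ w, V.mkQ (g w) = w := fun w ↦ congrArg Subtype.val (LinearMap.congr_fun hg w)
  refine ⟨LinearMap.toContinuousLinearMap (E.subtype ∘ₗ g) ∘L P ∘L V.mkQL, fun v hv ↦ ?_,
    fun x hx ↦ ?_⟩
  · simp [(Submodule.Quotient.mk_eq_zero V).mpr hv]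
  · rw [← Submodule.Quotient.mk_eq_zero, Submodule.Quotient.mk_sub, sub_eq_zero]
    have hPx : P (V.mkQL x) = ⟨V.mkQ x, Submodule.mem_map_of_mem hx⟩ := hP ⟨_, _⟩
    simp only [ContinuousLinearMap.comp_apply, hPx]
    exact (hg' ⟨V.mkQ x, Submodule.mem_map_of_mem hx⟩).symm

end Functionals

section FiniteRank

variable {X : Type*} [NormedAddCommGroup X] [NormedSpace ℝ X] {ι : Type*} [Fintype ι]

def sumSmulRight (θ : ι → StrongDual ℝ X) (z : ι → X) : X →L[ℝ] X :=
  ∑ t, (θ t).smulRight (z t)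

variable {θ : ι → StrongDual ℝ X}

@[simp]
theorem sumSmulRight_apply (z : ι → X) (x : X) : sumSmulRight θ z x = ∑ t, θ t x • z t := by
  simp [sumSmulRight]

theorem sumSmulRight_apply_sumSmulRight {z z' : ι → X} (h : ∀ s t, θ s (z t) = 0) (x : X) :
    sumSmulRight θ z' (sumSmulRight θ z x) = 0 := by
  simp [h]

theorem sumSmulRight_apply_of_dual [DecidableEq ι] {u : ι → X}
    (hu : ∀ s t, θ s (u t) = if s = t then 1 else 0) (z : ι → X) (t : ι) :
    sumSmulRight θ z (u t) = z t := by
  simp [hu]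

theorem sumSmulRight_apply_mem_smul {K : Set X} (hconv : Convex ℝ K) (hbal : Balanced ℝ K)
    (h0 : (0 : X) ∈ K) {R : ℝ} (hR : ∀ k ∈ K, ‖k‖ ≤ R) {z : ι → X} {c : ι → ℝ}
    (hc : ∀ t, 0 ≤ c t) (hz : ∀ t, z t ∈ c t • K) {k : X} (hk : k ∈ K) :
    sumSmulRight θ z k ∈ (∑ t, ‖θ t‖ * R * c t) • K := by
  have hR0 : 0 ≤ R := (norm_nonneg _).trans (hR 0 h0)
  rw [sumSmulRight_apply]
  refine hconv.sum_mem_sum_smul h0 _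
    (fun t _ ↦ mul_nonneg (mul_nonneg (norm_nonneg _) hR0) (hc t)) fun t _ ↦ ?_
  exact hbal.smul_mem_mul_smul ((θ t).le_opNorm_of_le (hR k hk)) (hz t)

end FiniteRank

section Covering

variable {X : Type*} [NormedAddCommGroup X] [NormedSpace ℝ X] {K : Set X}
  {F : Type*} [NormedAddCommGroup F] [NormedSpace ℝ F] [FiniteDimensional ℝ F]

theorem exists_subset_image_smul_sub_sumSmulRight_add (hconv : Convex ℝ K)
    (hbal : Balanced ℝ K) (h0 : (0 : X) ∈ K) {R : ℝ} (hR : ∀ k ∈ K, ‖k‖ ≤ R) {ι : Type*}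
    [Fintype ι] (θ : ι → StrongDual ℝ X) {a b : ι → X} (ha : ∀ t, a t ∈ Submodule.span ℝ K)
    (hb : ∀ t, b t ∈ Submodule.span ℝ K) (hθa : ∀ s t, θ s (a t) = 0)
    (hθb : ∀ s t, θ s (b t) = 0) :
    ∃ c : ℝ,
      K ⊆ (c • (ContinuousLinearMap.id ℝ X - sumSmulRight θ a) + sumSmulRight θ b) '' K := by
  have hR0 : 0 ≤ R := (norm_nonneg _).trans (hR 0 h0)
  choose γa hγa0 hγa using fun t ↦ exists_nonneg_mem_smul_of_mem_span hconv hbal h0 (ha t)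
  choose γb hγb0 hγb using fun t ↦ exists_nonneg_mem_smul_of_mem_span hconv hbal h0 (hb t)
  set Ca := ∑ t, ‖θ t‖ * R * γa t
  set Cb := ∑ t, ‖θ t‖ * R * γb t
  have hCa : 0 ≤ Ca := Finset.sum_nonneg fun t _ ↦ by have := hγa0 t; positivity
  have hCb : 0 ≤ Cb := Finset.sum_nonneg fun t _ ↦ by have := hγb0 t; positivity
  set c := 1 + Ca + Cb
  have hc : 0 < c := by positivity
  have hc_inv : ‖c⁻¹‖ ≤ c⁻¹ := (Real.norm_of_nonneg (by positivity)).le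
  have hc_sq : ‖-c⁻¹ ^ 2‖ ≤ c⁻¹ := by
    rw [norm_neg, Real.norm_of_nonneg (by positivity)]
    exact pow_le_of_le_one (by positivity) (inv_le_one_of_one_le₀ (by linarith)) two_ne_zero
  refine ⟨c, fun k hk ↦ ⟨c⁻¹ • k + c⁻¹ • sumSmulRight θ a k + (-c⁻¹ ^ 2) • sumSmulRight θ b k,
    ?_, ?_⟩⟩
  · have hmem := hconv.add_mem_add_smul (by positivity) (by positivity)
      (hconv.add_mem_add_smul (by positivity) (by positivity)
        (hbal.smul_mem_mul_smul hc_inv (show k ∈ (1 : ℝ) • K by rwa [one_smul]))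
        (hbal.smul_mem_mul_smul hc_inv
          (sumSmulRight_apply_mem_smul hconv hbal h0 hR hγa0 hγa hk)))
      (hbal.smul_mem_mul_smul hc_sq (sumSmulRight_apply_mem_smul hconv hbal h0 hR hγb0 hγb hk))
    rwa [← mul_add, ← mul_add, inv_mul_cancel₀ hc.ne', one_smul] at hmem
  · simp only [add_apply, smul_apply, sub_apply, ContinuousLinearMap.id_apply, map_add,
      map_smul, sumSmulRight_apply_sumSmulRight hθa, sumSmulRight_apply_sumSmulRight hθb]
    match_scalars <;> field_simp <;> ring

theorem exists_subset_image_apply_eq_of_finiteDimensional (hK : Bornology.IsBounded K)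
    (hconv : Convex ℝ K) (hbal : Balanced ℝ K) (h0 : (0 : X) ∈ K)
    (hinf : ¬FiniteDimensional ℝ (Submodule.span ℝ K)) (T : X →L[ℝ] X) (F₀ : Submodule ℝ X)
    [FiniteDimensional ℝ F₀] (hF₀ : F₀ ≤ (Submodule.span ℝ K).topologicalClosure)
    (hTF₀ : ∀ y ∈ F₀, T y ∈ (Submodule.span ℝ K).topologicalClosure) (φ : X →L[ℝ] F) :
    ∃ D : X →L[ℝ] X, K ⊆ D '' K ∧ ∀ y ∈ F₀, φ (D y) = φ (T y) := by
  classical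
  obtain ⟨R, hR⟩ := hK.exists_norm_le
  set u := Module.finBasis ℝ F₀
  obtain ⟨w, hwS, hwφ, hwli⟩ := exists_mem_apply_eq_linearIndependent_mkQ_comp hinf φ F₀
    (y := Sum.elim (fun t ↦ (u t : X)) (fun t ↦ T (u t)))
    (by rintro (t | t) <;> simp [hF₀ (u t).2, hTF₀ _ (u t).2])
  obtain ⟨θ, hθ⟩ := (u.linearIndependent.sumElim_of_quotient w hwli).exists_dual
  obtain ⟨c, hc⟩ := exists_subset_image_smul_sub_sumSmulRight_add hconv hbal h0 hR
    (fun t ↦ θ (.inl t)) (a := w ∘ .inl) (b := w ∘ .inr) (fun _ ↦ hwS _) (fun _ ↦ hwS _)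
    (fun s t ↦ by simpa using hθ (.inl s) (.inr (.inl t)))
    (fun s t ↦ by simpa using hθ (.inl s) (.inr (.inr t)))
  have hu : ∀ s t, θ (.inl s) (u t) = if s = t then 1 else 0 := fun s t ↦ by
    simpa using hθ (.inl s) (.inl t)
  refine ⟨_, hc, fun y hy ↦ ?_⟩
  lift y to F₀ using hy
  rw [← u.sum_repr y]
  simp only [Submodule.coe_sum, Submodule.coe_smul, map_sum, map_smul, add_apply, smul_apply,
    sub_apply, ContinuousLinearMap.id_apply, sumSmulRight_apply_of_dual hu]
  simp [hwφ]

theorem exists_subset_image_apply_eq (hK : Bornology.IsBounded K) (hconv : Convex ℝ K)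
    (hbal : Balanced ℝ K) (hinf : ¬FiniteDimensional ℝ (Submodule.span ℝ K)) (T : X →L[ℝ] X)
    (hT : ∀ x ∈ (Submodule.span ℝ K).topologicalClosure,
      T x ∈ (Submodule.span ℝ K).topologicalClosure)
    (xs : Finset X) (φ : X →L[ℝ] F) :
    ∃ D : X →L[ℝ] X, K ⊆ D '' K ∧ ∀ x ∈ xs, φ (D x) = φ (T x) := by
  set V := (Submodule.span ℝ K).topologicalClosure
  have h0 : (0 : X) ∈ K := hbal.zero_mem <| Set.nonempty_iff_ne_empty.mpr fun h ↦
    hinf (by rw [h, Submodule.span_empty]; infer_instance)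
  have hKV : ∀ k ∈ K, k ∈ V := fun k hk ↦
    Submodule.le_topologicalClosure _ (Submodule.subset_span hk)
  have : IsClosed (V : Set X) := (Submodule.span ℝ K).isClosed_topologicalClosure
  obtain ⟨π, hπV, hπ⟩ := V.exists_continuousLinearMap_vanishing_sub_mem (Submodule.span ℝ xs)
  set F₀ := Submodule.span ℝ ((fun x ↦ x - π x) '' xs)
  have : FiniteDimensional ℝ F₀ := FiniteDimensional.span_of_finite ℝ (xs.finite_toSet.image _)
  have hF₀ : F₀ ≤ V := Submodule.span_le.mpr <| by
    rintro _ ⟨x, hx, rfl⟩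
    exact hπ x (Submodule.subset_span hx)
  obtain ⟨D₀, hD₀K, hD₀φ⟩ := exists_subset_image_apply_eq_of_finiteDimensional hK hconv hbal h0
    hinf T F₀ hF₀ (fun y hy ↦ hT y (hF₀ hy)) φ
  refine ⟨D₀ + (T - D₀) ∘L π, fun k hk ↦ ?_, fun x hx ↦ ?_⟩
  · obtain ⟨y, hy, rfl⟩ := hD₀K hk
    exact ⟨y, hy, by simp [hπV y (hKV y hy)]⟩
  · calc φ ((D₀ + (T - D₀) ∘L π) x) = φ (D₀ (x - π x)) + φ (T (π x)) := by simp; abel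
      _ = φ (T x) := by
        rw [hD₀φ _ (Submodule.subset_span ⟨x, hx, rfl⟩), ← map_add, ← map_add, sub_add_cancel]

end Covering

theorem AK_subset_WOT_closure_of_covering_general
    {X : Type*} [NormedAddCommGroup X] [NormedSpace ℝ X]
    (K : Set X) (hK : IsCompact K) (hconv : Convex ℝ K) (hbal : Balanced ℝ K)
    (hinf : ¬ FiniteDimensional ℝ (Submodule.span ℝ K))
    (T : X →L[ℝ] X)
    (hT : ∀ x ∈ (Submodule.span ℝ K).topologicalClosure,
      T x ∈ (Submodule.span ℝ K).topologicalClosure) :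
    ContinuousLinearMapWOT.ofCLM T ∈
      closure ((ContinuousLinearMapWOT.ofCLM (σ := RingHom.id ℝ) (E := X) (F := X)) '' {D : X →L[ℝ] X | K ⊆ D '' K}) := by
  classical
  refine ContinuousLinearMapWOT.ofCLM_mem_closure_image fun s ↦ ?_
  obtain ⟨D, hDK, hD⟩ := exists_subset_image_apply_eq hK.isBounded hconv hbal hinf T hT
    (s.image Prod.fst) (ContinuousLinearMap.pi fun p : s ↦ p.1.2)
  exact ⟨D, hDK, fun p hp ↦ congrFun (hD p.1 (Finset.mem_image_of_mem _ hp)) ⟨p, hp⟩⟩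

/-- If `K` is an absolutely convex compact with infinite-dimensional span in a Banach space
`X`, then every operator leaving the closed span `V_K` invariant lies in the weak operator
topology closure of `G(K) = {D : D K ⊇ K}`; i.e. `A_K ⊆ WG(K)`. -/
theorem AK_subset_WOT_closure_of_covering
    {X : Type*} [NormedAddCommGroup X] [NormedSpace ℝ X] [CompleteSpace X]
    (K : Set X) (hK : IsCompact K) (hconv : Convex ℝ K) (hbal : Balanced ℝ K)
    (hinf : ¬ FiniteDimensional ℝ (Submodule.span ℝ K))
    (T : X →L[ℝ] X)
    (hT : ∀ x ∈ (Submodule.span ℝ K).topologicalClosure,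
      T x ∈ (Submodule.span ℝ K).topologicalClosure) :
    ContinuousLinearMapWOT.ofCLM T ∈
      closure ((ContinuousLinearMapWOT.ofCLM (σ := RingHom.id ℝ) (E := X) (F := X)) '' {D : X →L[ℝ] X | K ⊆ D '' K}) :=
  AK_subset_WOT_closure_of_covering_general K hK hconv hbal hinf T hT
end

section
/- Let K be an absolutely convex compact subset of a Banach space X whose linear span is infinite-dimensional. Then for each finite-dimensional subspace F ⊆ X*, each finite-dimensional subspace Y ⊆ X, and each linear map N : Y → X satisfying N(Y ∩ V_K) ⊆ lin(K) (the linear span of K), there exists a bounded linear operator D on X with DK ⊇ K such that f(Dx − Nx) = 0 for every x ∈ Y and every f ∈ F. -/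
/-!
Let `L = lin K`, `V = closure L`, and let `W = F_⊥`, a closed subspace of finite codimension.
On a complement of `Y ∩ V` in `Y` the operator can be prescribed at will by a finite-rank
correction vanishing on `V` (Hahn–Banach in `X ⧸ V`); this does not move `K ⊆ V`.

On a basis `y` of `Y ∩ V` take `D = c + T` with `T = ∑ ζ_l ⊗ t_l`, `ζ_s (y_l) = δ_sl` and
`t_l ∈ L ∩ ⋂ ker ζ_s`. Then `T² = 0`, so `c⁻¹ (1 - c⁻¹ T)` inverts `D` on `L`. Every vector of `L`
lies in some `r • K`, and `T K ⊆ M • K` with `M` growing only linearly in `c`; hence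
`c⁻¹ K - c⁻² T K ⊆ K` for large `c`, which gives `K ⊆ D K`. The vectors `t_l` must have the
`F`-values of `N y_l - c y_l`: as `L + W` is closed, `y_l ≡ v_l mod W` for some `v_l ∈ L`, and
since `L ∩ W` is infinite-dimensional there are `u_i ∈ L ∩ W` with `ζ_s (u_i) = δ_si`, which
correct `N y_l - c v_l` into `⋂ ker ζ_s` without changing its `F`-values.
-/

open scoped Pointwise

section ScaledCopies

variable {X : Type*} [AddCommGroup X] [Module ℝ X] {K : Set X} {x y : X} {r s : ℝ}

lemma Balanced.mem_smul_set_of_abs_le (hbal : Balanced ℝ K) (hx : x ∈ r • K) (hrs : |r| ≤ s) :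
    x ∈ s • K :=
  hbal.smul_mono (by simpa [Real.norm_eq_abs, abs_of_nonneg ((abs_nonneg r).trans hrs)] using hrs)
    hx

lemma Balanced.smul_mem_smul_set_abs_mul (hbal : Balanced ℝ K) (hx : x ∈ r • K) (hr : 0 ≤ r)
    (a : ℝ) : a • x ∈ (|a| * r) • K := by
  have hax : a • x ∈ (a * r) • K := by
    rw [← smul_smul]
    exact Set.smul_mem_smul_set hx
  exact hbal.mem_smul_set_of_abs_le hax (by rw [abs_mul, abs_of_nonneg hr])

lemma Convex.add_mem_add_smul_set (hconv : Convex ℝ K) (hx : x ∈ r • K) (hy : y ∈ s • K)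
    (hr : 0 ≤ r) (hs : 0 ≤ s) : x + y ∈ (r + s) • K :=
  hconv.add_smul hr hs ▸ Set.add_mem_add hx hy

lemma sum_smul_mem_smul_set (hconv : Convex ℝ K) (hbal : Balanced ℝ K) (h0 : (0 : X) ∈ K)
    {ι : Type*} (t : Finset ι) {a ρ σ : ι → ℝ} {v : ι → X}
    (hv : ∀ i ∈ t, v i ∈ ρ i • K) (hρ : ∀ i ∈ t, 0 ≤ ρ i) (ha : ∀ i ∈ t, |a i| ≤ σ i) :
    ∑ i ∈ t, a i • v i ∈ (∑ i ∈ t, σ i * ρ i) • K := by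
  classical
  induction t using Finset.induction_on with
  | empty => simpa using Set.zero_mem_smul_set h0
  | insert i t hi ih =>
    simp only [Finset.mem_insert, forall_eq_or_imp] at hv hρ ha
    rw [Finset.sum_insert hi, Finset.sum_insert hi]
    refine hconv.add_mem_add_smul_set
      (hbal.mem_smul_set_of_abs_le (hbal.smul_mem_smul_set_abs_mul hv.1 hρ.1 (a i)) ?_)
      (ih hv.2 hρ.2 ha.2) ?_ ?_
    · rw [abs_mul, abs_abs, abs_of_nonneg hρ.1]
      exact mul_le_mul_of_nonneg_right ha.1 hρ.1
    · exact mul_nonneg ((abs_nonneg _).trans ha.1) hρ.1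
    · exact Finset.sum_nonneg fun j hj => mul_nonneg ((abs_nonneg _).trans (ha.2 j hj)) (hρ.2 j hj)

lemma exists_mem_smul_set_of_mem_span (hconv : Convex ℝ K) (hbal : Balanced ℝ K)
    (h0 : (0 : X) ∈ K) (hx : x ∈ Submodule.span ℝ K) : ∃ r : ℝ, 0 ≤ r ∧ x ∈ r • K := by
  induction hx using Submodule.span_induction with
  | mem x hx => exact ⟨1, zero_le_one, by rwa [one_smul]⟩
  | zero => exact ⟨0, le_rfl, Set.zero_mem_smul_set h0⟩
  | add x y _ _ hx hy =>
    obtain ⟨r, hr, hxr⟩ := hx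
    obtain ⟨s, hs, hys⟩ := hy
    exact ⟨r + s, add_nonneg hr hs, hconv.add_mem_add_smul_set hxr hys hr hs⟩
  | smul a x _ hx =>
    obtain ⟨r, hr, hxr⟩ := hx
    exact ⟨|a| * r, by positivity, hbal.smul_mem_smul_set_abs_mul hxr hr a⟩

lemma subset_image_of_eq_smul_add (hconv : Convex ℝ K) (hbal : Balanced ℝ K)
    (D : X →ₗ[ℝ] X) (T : X → X) {c M : ℝ} (hc : 0 < c) (hM : 0 ≤ M) (hcM : c + M ≤ c ^ 2)
    (hD : ∀ k ∈ K, D k = c • k + T k) (hDT : ∀ k ∈ K, D (T k) = c • T k)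
    (hT : ∀ k ∈ K, T k ∈ M • K) : K ⊆ D '' K := by
  intro g hg
  -- on `K`, `D = c • (1 + c⁻¹ • T)` with `T ∘ T = 0`, so `D⁻¹ = c⁻¹ • (1 - c⁻¹ • T)` there
  refine ⟨c⁻¹ • g + (-(c⁻¹ ^ 2)) • T g, ?_, ?_⟩
  · have hx := hconv.add_mem_add_smul_set (Set.smul_mem_smul_set (a := c⁻¹) hg)
      (hbal.smul_mem_smul_set_abs_mul (hT g hg) hM (-(c⁻¹ ^ 2))) (by positivity) (by positivity)
    rw [← one_smul ℝ K]
    refine hbal.mem_smul_set_of_abs_le hx ?_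
    rw [abs_neg, abs_of_nonneg (by positivity), abs_of_nonneg (by positivity),
      ← mul_le_mul_iff_of_pos_left (pow_pos hc 2)]
    field_simp
    linarith
  · rw [map_add, map_smul, map_smul, hD g hg, hDT g hg]
    match_scalars
    · field_simp
    · field_simp
      ring

end ScaledCopies

section LinearAlgebra

variable {X : Type*} [AddCommGroup X] [Module ℝ X]

lemma Submodule.not_finiteDimensional_inf {U W : Submodule ℝ X} (hU : ¬FiniteDimensional ℝ U)
    [FiniteDimensional ℝ (X ⧸ W)] : ¬FiniteDimensional ℝ (U ⊓ W : Submodule ℝ X) := by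
  intro h
  refine hU (Module.Finite.iff_fg.2 (fg_of_fg_map_of_fg_inf_ker W.mkQ
    (IsNoetherian.noetherian _) ?_))
  rw [ker_mkQ]
  exact Module.Finite.iff_fg.1 h

lemma exists_linearIndependent_sum_elim {ι κ : Type*} [Finite ι] [Finite κ] {y : ι → X}
    (hy : LinearIndependent ℝ y) {U : Submodule ℝ X} (hU : ¬FiniteDimensional ℝ U) :
    ∃ u : κ → X, (∀ i, u i ∈ U) ∧ LinearIndependent ℝ (Sum.elim y u) := by
  set S := Submodule.span ℝ (Set.range y)
  have : FiniteDimensional ℝ S := FiniteDimensional.span_of_finite ℝ (Set.finite_range y)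
  obtain ⟨S', hSS'⟩ := S.exists_isCompl
  have : FiniteDimensional ℝ (X ⧸ S') :=
    (Submodule.quotientEquivOfIsCompl S' S hSS'.symm).symm.finiteDimensional
  have hrank : (Nat.card κ : Cardinal) ≤ Module.rank ℝ (U ⊓ S' : Submodule ℝ X) :=
    Cardinal.natCast_lt_aleph0.le.trans
      (not_lt.1 (mt Module.rank_lt_aleph0_iff.1 (Submodule.not_finiteDimensional_inf hU)))
  obtain ⟨f, hf⟩ := exists_linearIndependent_of_le_rank hrank
  let e := Finite.equivFin κ
  refine ⟨fun i => f (e i), fun i => (f (e i)).2.1, hy.sum_type ?_ ?_⟩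
  · exact (hf.map' _ (Submodule.ker_subtype _)).comp e e.injective
  · refine hSS'.disjoint.mono_right (Submodule.span_le.2 ?_)
    rintro _ ⟨i, rfl⟩
    exact (f (e i)).2.2

end LinearAlgebra

section NormedSpace

variable {X : Type*} [NormedAddCommGroup X] [NormedSpace ℝ X]

lemma Submodule.topologicalClosure_le_sup {W : Submodule ℝ X} (hW : IsClosed (W : Set X))
    [FiniteDimensional ℝ (X ⧸ W)] (L : Submodule ℝ X) : L.topologicalClosure ≤ L ⊔ W := by
  have := hW
  refine L.topologicalClosure_minimal le_sup_left ?_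
  rw [sup_comm, ← comap_map_mkQ]
  exact (closed_of_finiteDimensional (L.map W.mkQ)).preimage W.mkQL.continuous

lemma LinearIndependent.exists_continuousLinearMap_apply_eq {ι : Type*} [Finite ι] {v : ι → X}
    (hv : LinearIndependent ℝ v) (a : ι → ℝ) : ∃ φ : X →L[ℝ] ℝ, ∀ i, φ (v i) = a i := by
  have : FiniteDimensional ℝ (Submodule.span ℝ (Set.range v)) :=
    FiniteDimensional.span_of_finite ℝ (Set.finite_range v)
  obtain ⟨φ, hφ⟩ := StrongDual.exists_extension _
    (LinearMap.toContinuousLinearMap ((Module.Basis.span hv).constr ℝ a))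
  refine ⟨φ, fun i => ?_⟩
  have := hφ (Module.Basis.span hv i)
  rwa [LinearMap.coe_toContinuousLinearMap', Module.Basis.constr_basis,
    Module.Basis.span_apply] at this

lemma exists_continuousLinearMap_eq_zero_of_mem_and_apply_eq {V : Submodule ℝ X}
    (hV : IsClosed (V : Set X)) {Z : Type*} [AddCommGroup Z] [Module ℝ Z] [FiniteDimensional ℝ Z]
    (j : Z →ₗ[ℝ] X) (hj : ∀ z, j z ∈ V → z = 0) (g : Z →ₗ[ℝ] X) :
    ∃ E : X →L[ℝ] X, (∀ x ∈ V, E x = 0) ∧ ∀ z, E (j z) = g z := by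
  have := hV
  have hinj : Function.Injective (V.mkQ ∘ₗ j) := by
    rw [← LinearMap.ker_eq_bot, LinearMap.ker_eq_bot']
    exact fun z hz => hj z ((Submodule.Quotient.mk_eq_zero V).1 hz)
  let e := LinearEquiv.ofInjective _ hinj
  obtain ⟨G, hG⟩ := (LinearMap.toContinuousLinearMap
    (g ∘ₗ e.symm.toLinearMap)).exist_extension_of_finiteDimensional_range
  refine ⟨G.comp V.mkQL, fun x hx => ?_, fun z => ?_⟩
  · simp [(Submodule.Quotient.mk_eq_zero V).2 hx]
  · simpa [e] using congr($hG (e z)).symm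

lemma exists_forall_sum_smul_mem_smul_set {K : Set X} (hK : Bornology.IsBounded K)
    (hconv : Convex ℝ K) (hbal : Balanced ℝ K) (h0 : (0 : X) ∈ K) {ι : Type*} [Fintype ι]
    (ζ : ι → X →L[ℝ] ℝ) {a : ι → X} (ha : ∀ l, a l ∈ Submodule.span ℝ K) :
    ∃ M : ℝ, 0 ≤ M ∧ ∀ k ∈ K, ∑ l, ζ l k • a l ∈ M • K := by
  obtain ⟨R, hR⟩ := isBounded_iff_forall_norm_le.1 hK
  have hR0 : 0 ≤ R := (norm_nonneg _).trans (hR 0 h0)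
  choose ρ hρ haρ using fun l => exists_mem_smul_set_of_mem_span hconv hbal h0 (ha l)
  refine ⟨∑ l, (‖ζ l‖ * R) * ρ l,
    Finset.sum_nonneg fun l _ => mul_nonneg (mul_nonneg (norm_nonneg _) hR0) (hρ l), fun k hk => ?_⟩
  refine sum_smul_mem_smul_set hconv hbal h0 _ (fun l _ => haρ l) (fun l _ => hρ l)
    fun l _ => ?_
  rw [← Real.norm_eq_abs]
  exact (ζ l).le_opNorm_of_le (hR k hk)

/-- The kernel of this map is the pre-annihilator `F_⊥`. -/
def dualEval (F : Submodule ℝ (X →L[ℝ] ℝ)) : X →ₗ[ℝ] Module.Dual ℝ F :=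
  ((ContinuousLinearMap.coeLM ℝ).comp F.subtype).flip

lemma mem_ker_dualEval {F : Submodule ℝ (X →L[ℝ] ℝ)} {x : X} :
    x ∈ LinearMap.ker (dualEval F) ↔ ∀ f ∈ F, f x = 0 := by
  rw [LinearMap.mem_ker, LinearMap.ext_iff]
  simp [dualEval]

lemma isClosed_ker_dualEval (F : Submodule ℝ (X →L[ℝ] ℝ)) :
    IsClosed (LinearMap.ker (dualEval F) : Set X) := by
  have : (LinearMap.ker (dualEval F) : Set X) = ⋂ f : F, {x | (f : X →L[ℝ] ℝ) x = 0} := by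
    ext x
    rw [SetLike.mem_coe, mem_ker_dualEval]
    simp
  rw [this]
  exact isClosed_iInter fun f => isClosed_eq (f : X →L[ℝ] ℝ).continuous continuous_const

instance finiteDimensional_quotient_ker_dualEval (F : Submodule ℝ (X →L[ℝ] ℝ))
    [FiniteDimensional ℝ F] :
    FiniteDimensional ℝ (X ⧸ LinearMap.ker (dualEval F)) :=
  have : Module.Free ℝ F := Module.Free.of_divisionRing ℝ F
  Module.Finite.equiv (dualEval F).quotKerEquivRange.symm

end NormedSpace

section Construction

variable {X : Type*} [NormedAddCommGroup X] [NormedSpace ℝ X] {K : Set X}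

lemma exists_covering_operator_of_biorthogonal (hK : Bornology.IsBounded K)
    (hconv : Convex ℝ K) (hbal : Balanced ℝ K) (h0 : (0 : X) ∈ K) (W : Submodule ℝ X)
    {ι : Type*} [Fintype ι] [DecidableEq ι] (ζ : ι → X →L[ℝ] ℝ) (y u v w : ι → X)
    (hζy : ∀ s l, ζ s (y l) = if s = l then 1 else 0)
    (hζu : ∀ s i, ζ s (u i) = if s = i then 1 else 0)
    (hu : ∀ i, u i ∈ Submodule.span ℝ K ⊓ W) (hv : ∀ l, v l ∈ Submodule.span ℝ K)
    (hvy : ∀ l, v l - y l ∈ W) (hw : ∀ l, w l ∈ Submodule.span ℝ K) :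
    ∃ D : X →L[ℝ] X, K ⊆ D '' K ∧ ∀ l, D (y l) - w l ∈ W := by
  -- `Q` projects onto `⋂ ker ζ` along `span u`; it preserves `span K` and classes modulo `W`
  set Q : X →L[ℝ] X := ContinuousLinearMap.id ℝ X - ∑ i, (ζ i).smulRight (u i)
  have hQ : ∀ x, Q x = x - ∑ i, ζ i x • u i := fun x => by simp [Q]
  have hζQ : ∀ s x, ζ s (Q x) = 0 := fun s x => by simp [hQ, hζu]
  have hQW : ∀ x, Q x - x ∈ W := fun x => by
    rw [hQ, sub_sub_cancel_left]
    exact W.neg_mem (W.sum_mem fun i _ => W.smul_mem _ (hu i).2)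
  have hQK : ∀ x ∈ Submodule.span ℝ K, Q x ∈ Submodule.span ℝ K := fun x hx => by
    rw [hQ]
    exact Submodule.sub_mem _ hx (Submodule.sum_mem _ fun i _ => Submodule.smul_mem _ _ (hu i).1)
  obtain ⟨M₀, hM₀, hw'⟩ := exists_forall_sum_smul_mem_smul_set hK hconv hbal h0 ζ
    fun l => hQK _ (hw l)
  obtain ⟨M₁, hM₁, hv'⟩ := exists_forall_sum_smul_mem_smul_set hK hconv hbal h0 ζ
    fun l => hQK _ (hv l)
  set c := 1 + M₀ + M₁
  set T : X →L[ℝ] X := ∑ l, (ζ l).smulRight (Q (w l) - c • Q (v l))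
  have hT : ∀ x, T x = ∑ l, ζ l x • (Q (w l) - c • Q (v l)) := fun x => by simp [T]
  have hTT : ∀ x, T (T x) = 0 := fun x => by simp [hT, hζQ]
  refine ⟨c • ContinuousLinearMap.id ℝ X + T, ?_, fun l => ?_⟩
  · refine subset_image_of_eq_smul_add hconv hbal _ T (M := M₀ + c * M₁) (by positivity)
      (by positivity) (by nlinarith) (fun k _ => rfl) (fun k _ => by simp [hTT]) fun k hk => ?_
    have hsplit : T k = ∑ l, ζ l k • Q (w l) + (-c) • ∑ l, ζ l k • Q (v l) := by
      rw [hT, Finset.smul_sum, ← Finset.sum_add_distrib]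
      exact Finset.sum_congr rfl fun l _ => by module
    have hv'' := hbal.smul_mem_smul_set_abs_mul (hv' k hk) hM₁ (-c)
    rw [abs_neg, abs_of_pos (by positivity)] at hv''
    rw [hsplit]
    exact hconv.add_mem_add_smul_set (hw' k hk) hv'' hM₀ (by positivity)
  · have hTy : T (y l) = Q (w l) - c • Q (v l) := by simp [hT, hζy]
    have : c • y l + T (y l) - w l = (Q (w l) - w l) - c • (Q (v l) - v l) - c • (v l - y l) := by
      rw [hTy]; module
    simpa [this] using W.sub_mem (W.sub_mem (hQW _) (W.smul_mem c (hQW _))) (W.smul_mem c (hvy l))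

lemma exists_covering_operator_of_linearIndependent (hK : Bornology.IsBounded K)
    (hconv : Convex ℝ K) (hbal : Balanced ℝ K) (hinf : ¬FiniteDimensional ℝ (Submodule.span ℝ K))
    {W : Submodule ℝ X} (hW : IsClosed (W : Set X)) [FiniteDimensional ℝ (X ⧸ W)]
    {ι : Type*} [Fintype ι] [DecidableEq ι] {y : ι → X} (hy : LinearIndependent ℝ y)
    (hyV : ∀ l, y l ∈ (Submodule.span ℝ K).topologicalClosure) {w : ι → X}
    (hw : ∀ l, w l ∈ Submodule.span ℝ K) :
    ∃ D : X →L[ℝ] X, K ⊆ D '' K ∧ ∀ l, D (y l) - w l ∈ W := by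
  have h0 : (0 : X) ∈ K := hbal.zero_mem <| Set.nonempty_iff_ne_empty.2 fun hK0 => by
    rw [hK0, Submodule.span_empty] at hinf
    exact hinf inferInstance
  have hvex : ∀ l, ∃ v ∈ Submodule.span ℝ K, v - y l ∈ W := fun l => by
    obtain ⟨v, hv, z, hz, hvz⟩ :=
      Submodule.mem_sup.1 (Submodule.topologicalClosure_le_sup hW _ (hyV l))
    exact ⟨v, hv, by rw [← hvz, sub_add_cancel_left]; exact W.neg_mem hz⟩
  choose v hv hvy using hvex
  obtain ⟨u, hu, hyu⟩ := exists_linearIndependent_sum_elim (κ := ι) hy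
    (Submodule.not_finiteDimensional_inf (W := W) hinf)
  choose ζ hζ using fun s => hyu.exists_continuousLinearMap_apply_eq
    (Sum.elim (fun l => if s = l then 1 else 0) (fun i => if s = i then 1 else 0))
  exact exists_covering_operator_of_biorthogonal hK hconv hbal h0 W ζ y u v w
    (fun s l => hζ s (.inl l)) (fun s i => hζ s (.inr i)) hu hv hvy hw

lemma exists_covering_operator_of_mem_closure (hK : Bornology.IsBounded K)
    (hconv : Convex ℝ K) (hbal : Balanced ℝ K) (hinf : ¬FiniteDimensional ℝ (Submodule.span ℝ K))
    {W : Submodule ℝ X} (hW : IsClosed (W : Set X)) [FiniteDimensional ℝ (X ⧸ W)]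
    (Y : Submodule ℝ X) [FiniteDimensional ℝ Y] (N : Y →ₗ[ℝ] X)
    (hN : ∀ y : Y, (y : X) ∈ (Submodule.span ℝ K).topologicalClosure →
      N y ∈ Submodule.span ℝ K) :
    ∃ D : X →L[ℝ] X, K ⊆ D '' K ∧
      ∀ y : Y, (y : X) ∈ (Submodule.span ℝ K).topologicalClosure → D y - N y ∈ W := by
  set Y₁ := (Submodule.span ℝ K).topologicalClosure.comap Y.subtype
  set b := Module.finBasis ℝ Y₁
  obtain ⟨D, hKD, hD⟩ := exists_covering_operator_of_linearIndependent hK hconv hbal hinf hW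
    (b.linearIndependent.map' (Y.subtype ∘ₗ Y₁.subtype)
      (LinearMap.ker_eq_bot.2 (Subtype.val_injective.comp Subtype.val_injective)))
    (fun l => (b l).2) (fun l => hN _ (b l).2)
  refine ⟨D, hKD, fun y hy => ?_⟩
  set Λ : Y₁ →ₗ[ℝ] X := (D.toLinearMap ∘ₗ Y.subtype - N) ∘ₗ Y₁.subtype
  have hΛ : (⊤ : Submodule ℝ Y₁) ≤ W.comap Λ :=
    b.span_eq ▸ Submodule.span_le.2 (Set.range_subset_iff.2 hD)
  exact hΛ (Submodule.mem_top (x := ⟨y, hy⟩))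

lemma exists_eqOn_and_apply_sub_mem {V : Submodule ℝ X} (hV : IsClosed (V : Set X))
    (W : Submodule ℝ X) (Y : Submodule ℝ X) [FiniteDimensional ℝ Y] (N : Y →ₗ[ℝ] X)
    (D₁ : X →L[ℝ] X) (hD₁ : ∀ y : Y, (y : X) ∈ V → D₁ y - N y ∈ W) :
    ∃ D : X →L[ℝ] X, (∀ x ∈ V, D x = D₁ x) ∧ ∀ y : Y, D y - N y ∈ W := by
  obtain ⟨Z, hZ⟩ := (V.comap Y.subtype).exists_isCompl
  obtain ⟨E, hEV, hEZ⟩ := exists_continuousLinearMap_eq_zero_of_mem_and_apply_eq hV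
    (Y.subtype ∘ₗ Z.subtype) (fun z hz => by
      simpa using Submodule.disjoint_def.1 hZ.disjoint _ hz z.2)
    ((N - D₁.toLinearMap ∘ₗ Y.subtype) ∘ₗ Z.subtype)
  refine ⟨D₁ + E, fun x hx => by simp [hEV x hx], fun y => ?_⟩
  obtain ⟨y₁, hy₁, z, hz, rfl⟩ := Submodule.mem_sup.1 (hZ.sup_eq_top ▸ Submodule.mem_top (x := y))
  have hEz := hEZ ⟨z, hz⟩
  simp only [LinearMap.comp_apply, Submodule.subtype_apply, LinearMap.sub_apply,
    ContinuousLinearMap.coe_coe] at hEz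
  have hEy₁ : E y₁ = 0 := hEV _ hy₁
  have : (D₁ + E) ↑(y₁ + z) - N (y₁ + z) = D₁ y₁ - N y₁ := by
    simp [hEy₁, hEz]
  rw [this]
  exact hD₁ y₁ hy₁

end Construction

theorem exists_covering_operator_matching_on_finite_dims_general
    {X : Type*} [NormedAddCommGroup X] [NormedSpace ℝ X]
    (K : Set X) (hK : IsCompact K) (hconv : Convex ℝ K) (hbal : Balanced ℝ K)
    (hinf : ¬ FiniteDimensional ℝ (Submodule.span ℝ K))
    (F : Submodule ℝ (X →L[ℝ] ℝ)) (hF : FiniteDimensional ℝ F)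
    (Y : Submodule ℝ X) (hY : FiniteDimensional ℝ Y)
    (N : Y →ₗ[ℝ] X)
    (hN : ∀ y : Y, (y : X) ∈ (Submodule.span ℝ K).topologicalClosure →
      N y ∈ Submodule.span ℝ K) :
    ∃ D : X →L[ℝ] X, K ⊆ D '' K ∧
      ∀ y : Y, ∀ f ∈ F, f (D y - N y) = 0 := by
  obtain ⟨D₁, hKD₁, hD₁⟩ := exists_covering_operator_of_mem_closure hK.isBounded hconv hbal hinf
    (isClosed_ker_dualEval F) Y N hN
  obtain ⟨D, hDD₁, hD⟩ := exists_eqOn_and_apply_sub_mem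
    (Submodule.isClosed_topologicalClosure _) _ Y N D₁ hD₁
  refine ⟨D, fun k hk => ?_, fun y => mem_ker_dualEval.1 (hD y)⟩
  obtain ⟨x, hx, rfl⟩ := hKD₁ hk
  exact ⟨x, hx, hDD₁ x (Submodule.le_topologicalClosure _ (Submodule.subset_span hx))⟩

/-- For an absolutely convex compact `K` with infinite-dimensional span in a Banach space `X`,
any finite-dimensional subspace `F ⊆ X*`, finite-dimensional subspace `Y ⊆ X` and linear map
`N : Y → X` with `N(Y ∩ V_K) ⊆ lin K`, there is `D` covering `K` with `D - N` annihilated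
by `F` on `Y`. -/
theorem exists_covering_operator_matching_on_finite_dims
    {X : Type*} [NormedAddCommGroup X] [NormedSpace ℝ X] [CompleteSpace X]
    (K : Set X) (hK : IsCompact K) (hconv : Convex ℝ K) (hbal : Balanced ℝ K)
    (hinf : ¬ FiniteDimensional ℝ (Submodule.span ℝ K))
    (F : Submodule ℝ (X →L[ℝ] ℝ)) (hF : FiniteDimensional ℝ F)
    (Y : Submodule ℝ X) (hY : FiniteDimensional ℝ Y)
    (N : Y →ₗ[ℝ] X)
    (hN : ∀ y : Y, (y : X) ∈ (Submodule.span ℝ K).topologicalClosure →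
      N y ∈ Submodule.span ℝ K) :
    ∃ D : X →L[ℝ] X, K ⊆ D '' K ∧
      ∀ y : Y, ∀ f ∈ F, f (D y - N y) = 0 :=
  exists_covering_operator_matching_on_finite_dims_general K hK hconv hbal hinf F hF Y hY N hN
end

section
/- Let X be a reflexive Banach space and let A be a compact bounded linear operator on X with infinite-dimensional range. Set K = A*(B_{X*}) ⊆ X*, the image of the closed unit ball of the dual space under the adjoint of A. Then a bounded linear operator R on X satisfies ‖ARx‖ ≥ ‖Ax‖ for all x ∈ X if and only if R*K ⊇ K, where R* denotes the adjoint of R. -/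
/-! `‖S x‖ ≤ ‖T x‖` for all `x` says exactly that every functional `f ∘ S` with `‖f‖ ≤ 1` factors
as `g ∘ T` with `‖g‖ ≤ 1`. Given the inequality, `T x ↦ f (S x)` is a well-defined functional of
norm `≤ 1` on the range of `T`, which Hahn–Banach extends; conversely, test against a norming
functional of `S x`. The theorem is the case `S = A`, `T = A ∘ R`, since `R* (A* g) = (A R)* g`. -/

open Metric

namespace LinearMap

variable {R M M₂ M₃ : Type*} [Ring R] [AddCommGroup M] [AddCommGroup M₂] [AddCommGroup M₃]
  [Module R M] [Module R M₂] [Module R M₃]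

theorem exists_comp_rangeRestrict_eq_of_ker_le (f : M →ₗ[R] M₂) (g : M →ₗ[R] M₃)
    (h : ker f ≤ ker g) : ∃ φ : range f →ₗ[R] M₃, φ ∘ₗ f.rangeRestrict = g :=
  ⟨(ker f).liftQ g h ∘ₗ f.quotKerEquivRange.symm, by
    ext x
    exact congr_arg _ (f.quotKerEquivRange_symm_apply_image x _)⟩

end LinearMap

namespace ContinuousLinearMap

variable {𝕜 E F G : Type*} [RCLike 𝕜] [NormedAddCommGroup E] [NormedSpace 𝕜 E]
  [NormedAddCommGroup F] [NormedSpace 𝕜 F] [NormedAddCommGroup G] [NormedSpace 𝕜 G]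

theorem exists_comp_eq_of_forall_norm_apply_le {S : E →L[𝕜] F} {T : E →L[𝕜] G}
    (h : ∀ x, ‖S x‖ ≤ ‖T x‖) (f : StrongDual 𝕜 F) (hf : ‖f‖ ≤ 1) :
    ∃ g : StrongDual 𝕜 G, ‖g‖ ≤ 1 ∧ g.comp T = f.comp S := by
  have hker : LinearMap.ker (T : E →ₗ[𝕜] G) ≤
      LinearMap.ker ((f.comp S : E →L[𝕜] 𝕜) : E →ₗ[𝕜] 𝕜) := by
    intro x hx
    have hSx : S x = 0 := norm_le_zero_iff.mp (by simpa [show T x = 0 from hx] using h x)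
    simp [hSx]
  obtain ⟨φ, hφ⟩ := LinearMap.exists_comp_rangeRestrict_eq_of_ker_le _ _ hker
  have hφT (x : E) : φ ⟨T x, LinearMap.mem_range_self _ x⟩ = f (S x) :=
    LinearMap.congr_fun hφ x
  have hφ_bound : ∀ y, ‖φ y‖ ≤ 1 * ‖y‖ := by
    rintro ⟨_, x, rfl⟩
    calc ‖φ ⟨T x, _⟩‖ = ‖f (S x)‖ := by rw [hφT]
      _ ≤ ‖f‖ * ‖S x‖ := f.le_opNorm _
      _ ≤ 1 * ‖T x‖ := mul_le_mul hf (h x) (norm_nonneg _) zero_le_one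
  obtain ⟨g, hg, hg_norm⟩ := exists_extension_norm_eq _ (φ.mkContinuous 1 hφ_bound)
  refine ⟨g, hg_norm ▸ LinearMap.mkContinuous_norm_le _ zero_le_one hφ_bound, ?_⟩
  ext x
  exact (hg ⟨T x, LinearMap.mem_range_self _ x⟩).trans (hφT x)

theorem norm_apply_le_of_forall_exists_comp_eq {S : E →L[𝕜] F} {T : E →L[𝕜] G}
    (h : ∀ f : StrongDual 𝕜 F, ‖f‖ ≤ 1 → ∃ g : StrongDual 𝕜 G, ‖g‖ ≤ 1 ∧ g.comp T = f.comp S)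
    (x : E) : ‖S x‖ ≤ ‖T x‖ := by
  obtain ⟨f, hf, hfx⟩ := exists_dual_vector'' 𝕜 (S x)
  obtain ⟨g, hg, hgf⟩ := h f hf
  calc ‖S x‖ = ‖g (T x)‖ := by
        rw [← comp_apply, hgf, comp_apply, hfx, RCLike.norm_ofReal, abs_norm]
    _ ≤ ‖g‖ * ‖T x‖ := g.le_opNorm _
    _ ≤ ‖T x‖ := mul_le_of_le_one_left (norm_nonneg _) hg

theorem image_comp_closedBall_subset_iff (S : E →L[𝕜] F) (T : E →L[𝕜] G) :
    (fun f : StrongDual 𝕜 F => f.comp S) '' closedBall 0 1 ⊆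
        (fun g : StrongDual 𝕜 G => g.comp T) '' closedBall 0 1 ↔
      ∀ x, ‖S x‖ ≤ ‖T x‖ := by
  rw [Set.image_subset_iff]
  simp only [Set.subset_def, Set.mem_preimage, Set.mem_image, mem_closedBall_zero_iff]
  exact ⟨norm_apply_le_of_forall_exists_comp_eq, exists_comp_eq_of_forall_norm_apply_le⟩

end ContinuousLinearMap

theorem expanding_iff_adjoint_covers_general
    {X : Type*} [NormedAddCommGroup X] [NormedSpace ℝ X]
    (A : X →L[ℝ] X)
    (R : X →L[ℝ] X) :
    (∀ x : X, ‖A x‖ ≤ ‖A (R x)‖) ↔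
      (fun f : X →L[ℝ] ℝ => f.comp A) '' Metric.closedBall 0 1 ⊆
        (fun f : X →L[ℝ] ℝ => f.comp R) ''
          ((fun f : X →L[ℝ] ℝ => f.comp A) '' Metric.closedBall 0 1) := by
  rw [Set.image_image]
  exact (ContinuousLinearMap.image_comp_closedBall_subset_iff A (A.comp R)).symm

/-- Let `X` be a reflexive Banach space, `A` a compact operator on `X` with
infinite-dimensional range, and `K = A*(B_{X*})`. Then `‖ARx‖ ≥ ‖Ax‖` for all `x`
if and only if `R* K ⊇ K`. -/
theorem expanding_iff_adjoint_covers
    {X : Type*} [NormedAddCommGroup X] [NormedSpace ℝ X] [CompleteSpace X]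
    (hrefl : Function.Surjective (NormedSpace.inclusionInDoubleDual ℝ X))
    (A : X →L[ℝ] X) (hA : IsCompactOperator A)
    (hrange : ¬ FiniteDimensional ℝ (LinearMap.range (A : X →ₗ[ℝ] X)))
    (R : X →L[ℝ] X) :
    (∀ x : X, ‖A x‖ ≤ ‖A (R x)‖) ↔
      (fun f : X →L[ℝ] ℝ => f.comp A) '' Metric.closedBall 0 1 ⊆
        (fun f : X →L[ℝ] ℝ => f.comp R) ''
          ((fun f : X →L[ℝ] ℝ => f.comp A) '' Metric.closedBall 0 1) :=
  expanding_iff_adjoint_covers_general A R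
end
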